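/- Let 2 ≤ e ≤ m be integers and let T be a numerical semigroup with multiplicity m and embedding dimension e. Define a sequence by T₀ = T and, as long as M(Tₙ) − m > m, T_{n+1} = ⟨(msg(Tₙ) ∖ {M(Tₙ)}) ∪ {M(Tₙ) − m}⟩. Then each Tₙ is a numerical semigroup with multiplicity m and embedding dimension e satisfying Tₙ ⊊ T_{n+1}, and there exists k ∈ ℕ such that T_k = φ(T) is packed; in particular T ⊆ φ(T). -/

import Mathlib

open scoped Pointwise

/-- A numerical semigroup: an additive submonoid of ℕ with finite complement. -/
def IsNumericalSemigroup (S : Set ℕ) : Prop :=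
  0 ∈ S ∧ (∀ a ∈ S, ∀ b ∈ S, a + b ∈ S) ∧ Sᶜ.Finite

/-- Multiplicity: the least positive element. -/
noncomputable def mult (S : Set ℕ) : ℕ := sInf (S \ {0})

/-- Minimal system of generators: (S∖{0}) ∖ ((S∖{0})+(S∖{0})). -/
def msg (S : Set ℕ) : Set ℕ := (S \ {0}) \ ((S \ {0}) + (S \ {0}))

/-- Embedding dimension: cardinality of the minimal system of generators. -/
noncomputable def edim (S : Set ℕ) : ℕ := (msg S).ncard

/-- The submonoid of (ℕ,+) generated by a set, as a set. -/
def genSet (B : Set ℕ) : Set ℕ := (AddSubmonoid.closure B : Set ℕ)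

/-- Packed numerical semigroup: msg(S) ⊆ {m(S),…,2m(S)−1}. -/
def IsPacked (S : Set ℕ) : Prop := msg S ⊆ Set.Icc (mult S) (2 * mult S - 1)

/-- L(m,e): numerical semigroups with multiplicity m and embedding dimension e. -/
def Lset (m e : ℕ) : Set (Set ℕ) :=
  {S | IsNumericalSemigroup S ∧ mult S = m ∧ edim S = e}

/-- C(m,e): packed numerical semigroups in L(m,e). -/
def Cset (m e : ℕ) : Set (Set ℕ) := {S ∈ Lset m e | IsPacked S}

/-- φ(S): the monoid generated by {m + (x mod m) : x ∈ msg(S)}, m = mult S. -/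
noncomputable def phi (S : Set ℕ) : Set ℕ :=
  genSet ((fun x => mult S + x % mult S) '' msg S)

/-- The class [S] = {T ∈ L(m,e) : φ(T) = φ(S)}. -/
def classOf (m e : ℕ) (S : Set ℕ) : Set (Set ℕ) := {T ∈ Lset m e | phi T = phi S}

/-- Frobenius number: the largest element of the complement. -/
noncomputable def Frob (S : Set ℕ) : ℕ := sSup Sᶜ

/-- Genus: the cardinality of the complement. -/
noncomputable def genus (S : Set ℕ) : ℕ := Sᶜ.ncard

/-- The Apéry set of n in S. -/
def Ap (S : Set ℕ) (n : ℕ) : Set ℕ := {s ∈ S | ¬ ∃ t ∈ S, s = t + n}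

/-- Minimal elements of a set in a partial order. -/
def minimalsOf {β : Type*} [PartialOrder β] (X : Set β) : Set β :=
  {x ∈ X | ∀ y ∈ X, y ≤ x → y = x}

/-! Each step replaces the largest minimal generator `M > 2m` by `M - m ≡ M (mod m)`, which is
not in `S` because `M` is minimal. An element of the new semigroup that uses `M - m` is either
`M - m` itself or at least `M`, so the new generators are again minimal: multiplicity, embedding
dimension and `φ` are preserved while the largest generator strictly decreases. Once all
generators lie in `[m, 2m)` the semigroup is packed, and `φ` fixes packed semigroups. -/

section genSet

variable {A B : Set ℕ}

theorem subset_genSet : B ⊆ genSet B := AddSubmonoid.subset_closure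

theorem eq_zero_or_le_of_mem_genSet {m x : ℕ} (hB : ∀ b ∈ B, m ≤ b) (hx : x ∈ genSet B) :
    x = 0 ∨ m ≤ x := by
  induction hx using AddSubmonoid.closure_induction with
  | mem y hy => exact .inr (hB y hy)
  | zero => exact .inl rfl
  | add y z _ _ hy hz => omega

theorem mem_genSet_or_le_of_mem_genSet_insert {c x : ℕ} (hx : x ∈ genSet (insert c A)) :
    x ∈ genSet A ∨ c ≤ x := by
  induction hx using AddSubmonoid.closure_induction with
  | mem y hy =>
    rcases hy with rfl | hy
    · exact .inr le_rfl
    · exact .inl (subset_genSet hy)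
  | zero => exact .inl (AddSubmonoid.zero_mem _)
  | add y z _ _ hy hz =>
    rcases hy with hy | hy
    · rcases hz with hz | hz
      · exact .inl (AddSubmonoid.add_mem _ hy hz)
      · exact .inr (hz.trans (Nat.le_add_left z y))
    · exact .inr (hy.trans (Nat.le_add_right y z))

theorem msg_genSet_subset : msg (genSet B) ⊆ B := by
  suffices h : ∀ x ∈ genSet B, x = 0 ∨ x ∈ B ∨ x ∈ (genSet B \ {0}) + (genSet B \ {0}) by
    rintro x ⟨⟨hx, hx0⟩, hx_sum⟩
    exact ((h x hx).resolve_left hx0).resolve_right hx_sum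
  intro x hx
  induction hx using AddSubmonoid.closure_induction with
  | mem y hy => exact .inr (.inl hy)
  | zero => exact .inl rfl
  | add y z hy' hz' hy hz =>
    rcases eq_or_ne y 0 with rfl | hy0
    · simpa using hz
    rcases eq_or_ne z 0 with rfl | hz0
    · simpa using hy
    exact .inr (.inr ⟨y, ⟨hy', hy0⟩, z, ⟨hz', hz0⟩, rfl⟩)

theorem mult_genSet {m : ℕ} (hmB : m ∈ B) (hm0 : m ≠ 0) (hB : ∀ b ∈ B, m ≤ b) :
    mult (genSet B) = m := by
  have hm : m ∈ genSet B \ {0} := ⟨subset_genSet hmB, hm0⟩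
  refine le_antisymm (Nat.sInf_le hm) (le_csInf ⟨m, hm⟩ fun x hx => ?_)
  exact (eq_zero_or_le_of_mem_genSet hB hx.1).resolve_left hx.2

end genSet

section msg

variable {S : Set ℕ} {a b x : ℕ}

theorem add_notMem_msg (ha : a ∈ S \ {0}) (hb : b ∈ S \ {0}) : a + b ∉ msg S :=
  fun h => h.2 ⟨a, ha, b, hb, rfl⟩

theorem sub_notMem_of_mem_msg (hx : x ∈ msg S) (ha : a ∈ S \ {0}) (hax : a < x) : x - a ∉ S :=
  fun h => add_notMem_msg ⟨h, by simp; omega⟩ ha (by rwa [Nat.sub_add_cancel hax.le])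

theorem mult_le (hx : x ∈ S \ {0}) : mult S ≤ x := Nat.sInf_le hx

end msg

namespace IsNumericalSemigroup

variable {S B : Set ℕ} {x : ℕ}

def toAddSubmonoid (hS : IsNumericalSemigroup S) : AddSubmonoid ℕ where
  carrier := S
  add_mem' ha hb := hS.2.1 _ ha _ hb
  zero_mem' := hS.1

theorem genSet_subset (hS : IsNumericalSemigroup S) (hB : B ⊆ S) : genSet B ⊆ S :=
  AddSubmonoid.closure_le (S := hS.toAddSubmonoid).2 hB

theorem of_subset_genSet (hS : IsNumericalSemigroup S) (h : S ⊆ genSet B) :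
    IsNumericalSemigroup (genSet B) :=
  ⟨AddSubmonoid.zero_mem _, fun _ ha _ hb => AddSubmonoid.add_mem _ ha hb,
    hS.2.2.subset (Set.compl_subset_compl.2 h)⟩

theorem mult_mem (hS : IsNumericalSemigroup S) : mult S ∈ S \ {0} := by
  have h := hS.2.2.infinite_compl
  rw [compl_compl] at h
  exact Nat.sInf_mem (h.sdiff (Set.finite_singleton 0)).nonempty

theorem mult_pos (hS : IsNumericalSemigroup S) : 0 < mult S :=
  Nat.pos_of_ne_zero hS.mult_mem.2

theorem mult_mem_msg (hS : IsNumericalSemigroup S) : mult S ∈ msg S := by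
  refine ⟨hS.mult_mem, fun h => ?_⟩
  obtain ⟨a, ha, b, hb, hab⟩ := Set.mem_add.1 h
  have := mult_le ha
  have := mult_le hb
  have := hS.mult_pos
  omega

/-- Every minimal generator other than `m` exceeds an element of the finite set `Sᶜ` by `m`. -/
theorem msg_finite (hS : IsNumericalSemigroup S) : (msg S).Finite := by
  refine ((hS.2.2.image (· + mult S)).insert (mult S)).subset fun x hx => ?_
  rcases eq_or_ne x (mult S) with rfl | hxm
  · exact Set.mem_insert _ _
  have hlt : mult S < x := (mult_le hx.1).lt_of_ne' hxm
  exact .inr ⟨x - mult S, sub_notMem_of_mem_msg hx hS.mult_mem hlt, Nat.sub_add_cancel hlt.le⟩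

theorem sSup_msg_mem (hS : IsNumericalSemigroup S) : sSup (msg S) ∈ msg S :=
  Set.Nonempty.csSup_mem ⟨_, hS.mult_mem_msg⟩ hS.msg_finite

theorem le_sSup_msg (hS : IsNumericalSemigroup S) (hx : x ∈ msg S) : x ≤ sSup (msg S) :=
  le_csSup hS.msg_finite.bddAbove hx

theorem genSet_msg (hS : IsNumericalSemigroup S) : genSet (msg S) = S := by
  refine (hS.genSet_subset fun x hx => hx.1.1).antisymm fun s hs => ?_
  induction s using Nat.strong_induction_on with
  | _ s ih =>
    rcases eq_or_ne s 0 with rfl | hs0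
    · exact AddSubmonoid.zero_mem _
    by_cases hmsg : s ∈ msg S
    · exact subset_genSet hmsg
    obtain ⟨a, ha, b, hb, rfl⟩ : ∃ a ∈ S \ {0}, ∃ b ∈ S \ {0}, a + b = s := by
      by_contra h
      exact hmsg ⟨⟨hs, hs0⟩, fun h' => h (Set.mem_add.1 h')⟩
    have : a ≠ 0 := ha.2
    have : b ≠ 0 := hb.2
    exact AddSubmonoid.add_mem _ (ih a (by omega) ha.1) (ih b (by omega) hb.1)

theorem isPacked_of_sSup_msg_le (hS : IsNumericalSemigroup S)
    (h : sSup (msg S) ≤ 2 * mult S) : IsPacked S := by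
  intro x hx
  have hx2m : x ≠ mult S + mult S := by
    rintro rfl
    exact add_notMem_msg hS.mult_mem hS.mult_mem hx
  have := hS.le_sSup_msg hx
  exact ⟨mult_le hx.1, by omega⟩

theorem phi_eq_self_of_isPacked (hS : IsNumericalSemigroup S) (hp : IsPacked S) : phi S = S := by
  have hmod : ∀ x ∈ msg S, mult S + x % mult S = x := fun x hx => by
    obtain ⟨h1, h2⟩ := hp hx
    have := hS.mult_pos
    rw [Nat.mod_eq_sub_mod h1, Nat.mod_eq_of_lt (by omega)]
    omega
  rw [phi, Set.image_congr hmod, Set.image_id', hS.genSet_msg]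

end IsNumericalSemigroup

def lowerMaxGenerator (m : ℕ) (S : Set ℕ) : Set ℕ :=
  genSet ((msg S \ {sSup (msg S)}) ∪ {sSup (msg S) - m})

section lowerMaxGenerator

open IsNumericalSemigroup

variable {m : ℕ} {S : Set ℕ}

theorem subset_lowerMaxGenerator (hS : IsNumericalSemigroup S) (hm : mult S = m)
    (hM : m < sSup (msg S) - m) : S ⊆ lowerMaxGenerator m S := by
  suffices h : genSet (msg S) ⊆ lowerMaxGenerator m S by rwa [hS.genSet_msg] at h
  refine AddSubmonoid.closure_le.2 fun x hx => ?_
  rcases eq_or_ne x (sSup (msg S)) with rfl | hxM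
  · have hmx : m ∈ msg S \ {sSup (msg S)} := ⟨hm ▸ hS.mult_mem_msg, by simp; omega⟩
    have := AddSubmonoid.add_mem (AddSubmonoid.closure _)
      (subset_genSet (Set.mem_union_right _ rfl) : sSup (msg S) - m ∈ lowerMaxGenerator m S)
      (subset_genSet (Set.mem_union_left _ hmx) : m ∈ lowerMaxGenerator m S)
    rwa [Nat.sub_add_cancel (by omega)] at this
  · exact subset_genSet (.inl ⟨hx, hxM⟩)

theorem sSup_msg_sub_notMem (hS : IsNumericalSemigroup S) (hm : mult S = m)
    (hM : m < sSup (msg S) - m) : sSup (msg S) - m ∉ S :=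
  sub_notMem_of_mem_msg hS.sSup_msg_mem (hm ▸ hS.mult_mem) (by omega)

theorem ssubset_lowerMaxGenerator (hS : IsNumericalSemigroup S) (hm : mult S = m)
    (hM : m < sSup (msg S) - m) : S ⊂ lowerMaxGenerator m S :=
  (Set.ssubset_iff_of_subset (subset_lowerMaxGenerator hS hm hM)).2
    ⟨_, subset_genSet (Set.mem_union_right _ rfl), sSup_msg_sub_notMem hS hm hM⟩

theorem mult_lowerMaxGenerator (hS : IsNumericalSemigroup S) (hm : mult S = m)
    (hM : m < sSup (msg S) - m) : mult (lowerMaxGenerator m S) = m := by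
  refine mult_genSet (.inl ⟨hm ▸ hS.mult_mem_msg, by simp; omega⟩) (hm ▸ hS.mult_mem.2) ?_
  rintro b (hb | rfl)
  · exact hm ▸ mult_le hb.1.1
  · omega

theorem msg_lowerMaxGenerator (hS : IsNumericalSemigroup S) (hm : mult S = m)
    (hM : m < sSup (msg S) - m) :
    msg (lowerMaxGenerator m S) = (msg S \ {sSup (msg S)}) ∪ {sSup (msg S) - m} := by
  refine msg_genSet_subset.antisymm fun b hb => ?_
  have hge : ∀ x ∈ lowerMaxGenerator m S \ {0}, m ≤ x := fun x hx =>
    mult_lowerMaxGenerator hS hm hM ▸ mult_le hx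
  have hsplit : ∀ x ∈ lowerMaxGenerator m S, x ∈ S ∨ sSup (msg S) - m ≤ x := fun x hx => by
    rw [lowerMaxGenerator, Set.union_singleton] at hx
    exact (mem_genSet_or_le_of_mem_genSet_insert hx).imp_left
      (hS.genSet_subset (fun y hy => hy.1.1.1) ·)
  have hb0 : b ≠ 0 := by
    rcases hb with hb | rfl
    · exact hb.1.1.2
    · omega
  refine ⟨⟨subset_genSet hb, hb0⟩, fun ⟨s, hs, t, ht, hst⟩ => ?_⟩
  simp only at hst
  subst hst
  have : 0 < m := hm ▸ hS.mult_pos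
  have := hge s hs
  have := hge t ht
  rcases hb with ⟨hb, hbM⟩ | hb
  · -- a summand `≥ M - m` would force `s + t ≥ M`
    have : s + t ≤ sSup (msg S) := hS.le_sSup_msg hb
    have : s + t ≠ sSup (msg S) := hbM
    rcases hsplit s hs.1 with hsS | _
    · rcases hsplit t ht.1 with htS | _
      · exact add_notMem_msg ⟨hsS, hs.2⟩ ⟨htS, ht.2⟩ hb
      · omega
    · omega
  · simp only [Set.mem_singleton_iff] at hb
    have hsS : s ∈ S := (hsplit s hs.1).resolve_right (by omega)
    have htS : t ∈ S := (hsplit t ht.1).resolve_right (by omega)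
    have htm : t + m ∈ S \ {0} := ⟨hS.2.1 _ htS _ (hm ▸ hS.mult_mem.1), by simp; omega⟩
    refine add_notMem_msg ⟨hsS, hs.2⟩ htm ?_
    rw [← add_assoc, hb, Nat.sub_add_cancel (by omega)]
    exact hS.sSup_msg_mem

theorem edim_lowerMaxGenerator (hS : IsNumericalSemigroup S) (hm : mult S = m)
    (hM : m < sSup (msg S) - m) : edim (lowerMaxGenerator m S) = edim S := by
  have hnew : sSup (msg S) - m ∉ msg S \ {sSup (msg S)} :=
    fun h => sSup_msg_sub_notMem hS hm hM h.1.1.1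
  rw [edim, edim, msg_lowerMaxGenerator hS hm hM, Set.union_singleton,
    Set.ncard_insert_of_notMem hnew hS.msg_finite.sdiff,
    Set.ncard_sdiff_singleton_add_one hS.sSup_msg_mem hS.msg_finite]

theorem lowerMaxGenerator_mem_Lset {e : ℕ} (hS : S ∈ Lset m e) (hM : m < sSup (msg S) - m) :
    lowerMaxGenerator m S ∈ Lset m e := by
  obtain ⟨hS, hm, he⟩ := hS
  exact ⟨hS.of_subset_genSet (subset_lowerMaxGenerator hS hm hM),
    mult_lowerMaxGenerator hS hm hM, (edim_lowerMaxGenerator hS hm hM).trans he⟩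

theorem phi_lowerMaxGenerator (hS : IsNumericalSemigroup S) (hm : mult S = m)
    (hM : m < sSup (msg S) - m) : phi (lowerMaxGenerator m S) = phi S := by
  have hmod : (sSup (msg S) - m) % m = sSup (msg S) % m := by
    conv_rhs => rw [← Nat.sub_add_cancel (show m ≤ sSup (msg S) by omega)]
    exact (Nat.add_mod_right _ _).symm
  have hmsg : (fun x => m + x % m) '' msg S = insert (m + (sSup (msg S) - m) % m)
      ((fun x => m + x % m) '' (msg S \ {sSup (msg S)})) := by
    have hins : msg S = insert (sSup (msg S)) (msg S \ {sSup (msg S)}) := by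
      rw [Set.insert_sdiff_singleton, Set.insert_eq_of_mem hS.sSup_msg_mem]
    conv_lhs => rw [hins]
    rw [Set.image_insert_eq, hmod]
  rw [phi, phi, mult_lowerMaxGenerator hS hm hM, hm, msg_lowerMaxGenerator hS hm hM,
    Set.union_singleton, Set.image_insert_eq, hmsg]

theorem sSup_msg_lowerMaxGenerator_lt (hS : IsNumericalSemigroup S) (hm : mult S = m)
    (hM : m < sSup (msg S) - m) : sSup (msg (lowerMaxGenerator m S)) < sSup (msg S) := by
  have hS' := hS.of_subset_genSet (subset_lowerMaxGenerator hS hm hM)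
  have hmem : sSup (msg (lowerMaxGenerator m S)) ∈ msg (lowerMaxGenerator m S) :=
    hS'.sSup_msg_mem
  rw [msg_lowerMaxGenerator hS hm hM] at hmem ⊢
  rcases hmem with ⟨hx, hxM⟩ | hx
  · exact (hS.le_sSup_msg hx).lt_of_ne hxM
  · have : 0 < m := hm ▸ hS.mult_pos
    rw [hx]
    omega

end lowerMaxGenerator

theorem stmt8_general (m e : ℕ) (T : Set ℕ) (hT : T ∈ Lset m e)
    (Tseq : ℕ → Set ℕ) (h0 : Tseq 0 = T)
    (hstep : ∀ k, Tseq (k + 1) =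
      if m < sSup (msg (Tseq k)) - m then
        genSet ((msg (Tseq k) \ {sSup (msg (Tseq k))}) ∪ {sSup (msg (Tseq k)) - m})
      else Tseq k) :
    (∀ k, Tseq k ∈ Lset m e) ∧
    (∀ k, m < sSup (msg (Tseq k)) - m → Tseq k ⊂ Tseq (k + 1)) ∧
    (∃ k, Tseq k = phi T ∧ IsPacked (Tseq k)) ∧
    T ⊆ phi T := by
  have hsucc : ∀ k, m < sSup (msg (Tseq k)) - m → Tseq (k + 1) = lowerMaxGenerator m (Tseq k) :=
    fun k hk => by rw [hstep k, if_pos hk, lowerMaxGenerator]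
  have hinv : ∀ k, Tseq k ∈ Lset m e ∧ phi (Tseq k) = phi T ∧ T ⊆ Tseq k := by
    intro k
    induction k with
    | zero => rw [h0]; exact ⟨hT, rfl, subset_rfl⟩
    | succ k ih =>
      obtain ⟨hL, hphi, hsub⟩ := ih
      by_cases hk : m < sSup (msg (Tseq k)) - m
      · rw [hsucc k hk]
        exact ⟨lowerMaxGenerator_mem_Lset hL hk, (phi_lowerMaxGenerator hL.1 hL.2.1 hk).trans hphi,
          hsub.trans (subset_lowerMaxGenerator hL.1 hL.2.1 hk)⟩
      · rw [hstep k, if_neg hk]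
        exact ⟨hL, hphi, hsub⟩
  have hstrict : ∀ k, m < sSup (msg (Tseq k)) - m → Tseq k ⊂ Tseq (k + 1) := fun k hk =>
    hsucc k hk ▸ ssubset_lowerMaxGenerator (hinv k).1.1 (hinv k).1.2.1 hk
  obtain ⟨k, hk⟩ : ∃ k, ¬ m < sSup (msg (Tseq k)) - m := by
    obtain ⟨k, hk⟩ := WellFounded.not_rel_apply_succ (r := (· < ·)) fun k => sSup (msg (Tseq k))
    exact ⟨k, fun h => hk (hsucc k h ▸
      sSup_msg_lowerMaxGenerator_lt (hinv k).1.1 (hinv k).1.2.1 h)⟩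
  obtain ⟨⟨hS, hm, -⟩, hphi, hTk⟩ := hinv k
  have hpacked : IsPacked (Tseq k) := hS.isPacked_of_sSup_msg_le (by omega)
  have hfix : Tseq k = phi T := by rw [← hphi, hS.phi_eq_self_of_isPacked hpacked]
  exact ⟨fun k => (hinv k).1, hstrict, ⟨k, hfix, hpacked⟩, hfix ▸ hTk⟩

/-- starting from T ∈ L(m,e), the sequence T₀ = T,
T_{n+1} = ⟨(msg(Tₙ) ∖ {M(Tₙ)}) ∪ {M(Tₙ) − m}⟩ as long as M(Tₙ) − m > m
(and constant afterwards), stays in L(m,e), is strictly increasing while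
the step condition holds, and reaches the packed semigroup φ(T);
in particular T ⊆ φ(T). Here M(Tₙ) = sSup (msg (Tseq n)). -/
theorem stmt8 (m e : ℕ) (h2 : 2 ≤ e) (hem : e ≤ m) (T : Set ℕ) (hT : T ∈ Lset m e)
    (Tseq : ℕ → Set ℕ) (h0 : Tseq 0 = T)
    (hstep : ∀ k, Tseq (k + 1) =
      if m < sSup (msg (Tseq k)) - m then
        genSet ((msg (Tseq k) \ {sSup (msg (Tseq k))}) ∪ {sSup (msg (Tseq k)) - m})
      else Tseq k) :
    (∀ k, Tseq k ∈ Lset m e) ∧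
    (∀ k, m < sSup (msg (Tseq k)) - m → Tseq k ⊂ Tseq (k + 1)) ∧
    (∃ k, Tseq k = phi T ∧ IsPacked (Tseq k)) ∧
    T ⊆ phi T :=
  stmt8_general m e T hT Tseq h0 hstep
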